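/- The chain of inequalities Z_LO ≤ Z_RNI^Path ≤ Z_RNI ≤ Z_NI holds: the optimal value of the LO model is at most the path-based randomized interdiction value, which is at most the arc-based randomized interdiction value, which is at most the network interdiction value. -/

import Mathlib

open scoped BigOperators

section NetworkInterdiction

variable {V E : Type} [Fintype V] [Fintype E] [DecidableEq V] [DecidableEq E]

/-- The basic assumptions on the network: the source and the sink are distinct,
no arc enters the source, no arc leaves the sink, and capacities are nonnegative. -/
def IsNetwork (src dst : E → V) (s t : V) (u : E → ℝ) : Prop :=
  s ≠ t ∧ (∀ e, dst e ≠ s) ∧ (∀ e, src e ≠ t) ∧ (∀ e, 0 ≤ u e)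

/-- Flow conservation at every node other than `s` and `t`. -/
def Conserves (src dst : E → V) (s t : V) (x : E → ℝ) : Prop :=
  ∀ v : V, v ≠ s → v ≠ t →
    ∑ e : E, (if dst e = v then x e else 0) = ∑ e : E, (if src e = v then x e else 0)

/-- `x` is an s-t-flow with respect to capacities `u`. -/
def IsFlow (src dst : E → V) (s t : V) (u : E → ℝ) (x : E → ℝ) : Prop :=
  (∀ e, 0 ≤ x e) ∧ (∀ e, x e ≤ u e) ∧ Conserves src dst s t x

/-- The value of a flow: the total flow into the sink `t`. -/
def flowVal (dst : E → V) (t : V) (x : E → ℝ) : ℝ :=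
  ∑ e : E, (if dst e = t then x e else 0)

/-- The payoff `f(μ,x)`: the maximum value of an s-t-flow `y` with `0 ≤ y_e ≤ x_e`
on the surviving arcs and `y_e = 0` on the removed arcs `μ`. -/
noncomputable def payoffF (src dst : E → V) (s t : V) (μ : Finset E) (x : E → ℝ) : ℝ :=
  sSup {z : ℝ | ∃ y : E → ℝ, (∀ e, 0 ≤ y e) ∧ (∀ e ∉ μ, y e ≤ x e) ∧
    (∀ e ∈ μ, y e = 0) ∧ Conserves src dst s t y ∧ z = flowVal dst t y}

/-- The scenario set `Ω`: all sets of exactly `Γ` arcs. -/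
def Scenarios (E : Type) [Fintype E] [DecidableEq E] (Γ : ℕ) : Finset (Finset E) :=
  Finset.univ.filter fun μ => μ.card = Γ

/-- `α` is a probability distribution on the scenario set `Ω`. -/
def IsDist (E : Type) [Fintype E] [DecidableEq E] (Γ : ℕ) (α : Finset E → ℝ) : Prop :=
  (∀ μ, 0 ≤ α μ) ∧ (∀ μ, μ ∉ Scenarios E Γ → α μ = 0) ∧
    ∑ μ ∈ Scenarios E Γ, α μ = 1

/-- `p` is (the list of arcs of) a directed path from `s` to `t`
visiting pairwise distinct vertices. -/
def IsSTPath (src dst : E → V) (s t : V) (p : List E) : Prop :=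
  p ≠ [] ∧ (∀ e ∈ p.head?, src e = s) ∧ (∀ e ∈ p.getLast?, dst e = t) ∧
  p.Chain' (fun e f => dst e = src f) ∧ (p.map src ++ [t]).Nodup

/-- The (finite) set `𝒫` of all directed s-t-paths. -/
noncomputable def stPaths (src dst : E → V) (s t : V) : Finset (List E) :=
  @Finset.filter _ (IsSTPath src dst s t) (Classical.decPred _)
    ((Finset.univ : Finset {l : List E // l.Nodup}).image Subtype.val)

/-- `xP` is a path-based s-t-flow with respect to capacities `u`. -/
noncomputable def IsPathFlow (src dst : E → V) (s t : V) (u : E → ℝ) (xP : List E → ℝ) : Prop :=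
  (∀ p, 0 ≤ xP p) ∧ (∀ p, p ∉ stPaths src dst s t → xP p = 0) ∧
  ∀ e : E, (∑ p ∈ stPaths src dst s t, if e ∈ p then xP p else 0) ≤ u e

/-- The path-based payoff `g(μ,x)`: the total flow on paths containing no removed arc. -/
noncomputable def payoffG (src dst : E → V) (s t : V) (μ : Finset E) (xP : List E → ℝ) : ℝ :=
  ∑ p ∈ stPaths src dst s t,
    max 0 (1 - ((p.countP fun e => decide (e ∈ μ)) : ℝ)) * xP p

/-- The network interdiction value `Z_NI`. -/
noncomputable def Z_NI (src dst : E → V) (s t : V) (u : E → ℝ) (Γ : ℕ) : ℝ :=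
  sInf {z : ℝ | ∃ μ ∈ Scenarios E Γ,
    z = sSup {w : ℝ | ∃ x : E → ℝ, IsFlow src dst s t u x ∧ w = payoffF src dst s t μ x}}

/-- The adaptive maximum flow value `Z_ADP`. -/
noncomputable def Z_ADP (src dst : E → V) (s t : V) (u : E → ℝ) (Γ : ℕ) : ℝ :=
  sSup {z : ℝ | ∃ x : E → ℝ, IsFlow src dst s t u x ∧
    z = sInf {w : ℝ | ∃ μ ∈ Scenarios E Γ, w = payoffF src dst s t μ x}}

/-- The (arc-based) randomized network interdiction value `Z_RNI`. -/
noncomputable def Z_RNI (src dst : E → V) (s t : V) (u : E → ℝ) (Γ : ℕ) : ℝ :=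
  sInf {z : ℝ | ∃ α : Finset E → ℝ, IsDist E Γ α ∧
    z = sSup {w : ℝ | ∃ x : E → ℝ, IsFlow src dst s t u x ∧
      w = ∑ μ ∈ Scenarios E Γ, α μ * payoffF src dst s t μ x}}

/-- The path-based network interdiction value `Z_NI^Path`. -/
noncomputable def Z_NIPath (src dst : E → V) (s t : V) (u : E → ℝ) (Γ : ℕ) : ℝ :=
  sInf {z : ℝ | ∃ μ ∈ Scenarios E Γ,
    z = sSup {w : ℝ | ∃ xP : List E → ℝ, IsPathFlow src dst s t u xP ∧
      w = payoffG src dst s t μ xP}}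

/-- The path-based adaptive maximum flow value `Z_ADP^Path`. -/
noncomputable def Z_ADPPath (src dst : E → V) (s t : V) (u : E → ℝ) (Γ : ℕ) : ℝ :=
  sSup {z : ℝ | ∃ xP : List E → ℝ, IsPathFlow src dst s t u xP ∧
    z = sInf {w : ℝ | ∃ μ ∈ Scenarios E Γ, w = payoffG src dst s t μ xP}}

/-- The path-based randomized network interdiction value `Z_RNI^Path`. -/
noncomputable def Z_RNIPath (src dst : E → V) (s t : V) (u : E → ℝ) (Γ : ℕ) : ℝ :=
  sInf {z : ℝ | ∃ α : Finset E → ℝ, IsDist E Γ α ∧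
    z = sSup {w : ℝ | ∃ xP : List E → ℝ, IsPathFlow src dst s t u xP ∧
      w = ∑ μ ∈ Scenarios E Γ, α μ * payoffG src dst s t μ xP}}

/-- The value `Z_LO(θ)` of the parametric LO model. -/
noncomputable def Z_LOAt (src dst : E → V) (s t : V) (u : E → ℝ) (Γ : ℕ) (θ : ℝ) : ℝ :=
  sSup {z : ℝ | ∃ x : E → ℝ, IsFlow src dst s t u x ∧ (∀ e, x e ≤ θ) ∧
    z = flowVal dst t x - Γ * θ}

/-- The optimal value `Z_LO` of the LO model. -/
noncomputable def Z_LO (src dst : E → V) (s t : V) (u : E → ℝ) (Γ : ℕ) : ℝ :=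
  sSup {z : ℝ | ∃ θ : ℝ, 0 ≤ θ ∧ z = Z_LOAt src dst s t u Γ θ}

/-- `(x, θ)` is an optimal solution of the LO model. -/
noncomputable def IsLOOptimal (src dst : E → V) (s t : V) (u : E → ℝ) (Γ : ℕ)
    (x : E → ℝ) (θ : ℝ) : Prop :=
  IsFlow src dst s t u x ∧ 0 ≤ θ ∧ (∀ e, x e ≤ θ) ∧
    flowVal dst t x - Γ * θ = Z_LO src dst s t u Γ

/-- The set `δ⁺(S)` of arcs going from `S` to its complement. -/
def cutArcs (src dst : E → V) (S : Finset V) : Finset E :=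
  Finset.univ.filter fun e => src e ∈ S ∧ dst e ∉ S

/-- The capacity `Cap(S,θ)` of a cut with respect to the truncated capacities `u(θ)`. -/
noncomputable def cutCap (src dst : E → V) (u : E → ℝ) (S : Finset V) (θ : ℝ) : ℝ :=
  ∑ e ∈ cutArcs src dst S, min (u e) θ

/-- The set `A(S,θ)` of arcs in `δ⁺(S)` with `θ ≤ u_e`. -/
noncomputable def cutA (src dst : E → V) (u : E → ℝ) (S : Finset V) (θ : ℝ) : Finset E :=
  @Finset.filter _ (fun e => θ ≤ u e) (Classical.decPred _) (cutArcs src dst S)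

/-- The set `B(S,θ)` of arcs in `δ⁺(S)` with `θ < u_e`. -/
noncomputable def cutB (src dst : E → V) (u : E → ℝ) (S : Finset V) (θ : ℝ) : Finset E :=
  @Finset.filter _ (fun e => θ < u e) (Classical.decPred _) (cutArcs src dst S)

/-- A directed cycle (closed directed walk) all of whose arcs lie in `S`. -/
def HasCycleIn (src dst : E → V) (S : Set E) : Prop :=
  ∃ c : List E, c ≠ [] ∧ (∀ e ∈ c, e ∈ S) ∧ c.Chain' (fun e f => dst e = src f) ∧
    ∀ e ∈ c.getLast?, ∀ f ∈ c.head?, dst e = src f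

section Helpers
set_option linter.unusedSectionVars false

variable {V E : Type} [Fintype V] [Fintype E] [DecidableEq V] [DecidableEq E]
variable {src dst : E → V}

/-- The list of heads of a chain equals the tail of the list of tails, plus the final head. -/
lemma map_dst_chain {p : List E} (hne : p ≠ [])
    (hch : p.Chain' fun e f => dst e = src f) {w : V}
    (hlast : ∀ e ∈ p.getLast?, dst e = w) :
    p.map dst = (p.map (src : E → V)).tail ++ [w] := by
  induction p with
  | nil => simp at hne
  | cons f rest ih =>
    cases rest with
    | nil =>
      simp only [List.getLast?_singleton, Option.mem_some_iff, forall_eq] at hlast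
      simp [hlast]
    | cons g rest' =>
      simp only [List.Chain', List.isChain_cons_cons] at hch
      have h1 : (g :: rest') ≠ [] := by simp
      have h2 := ih h1 hch.2 (by simpa [List.getLast?_cons_cons] using hlast)
      simp only [List.map_cons, List.tail_cons] at h2 ⊢
      rw [h2, hch.1]
      simp

lemma count_dst_chain {p : List E} (hne : p ≠ [])
    (hch : p.Chain' fun e f => dst e = src f) {w : V}
    (hlast : ∀ e ∈ p.getLast?, dst e = w) (v : V) :
    (p.map dst).count v
      = ((p.map (src : E → V)).tail).count v + (if w = v then 1 else 0) := by
  rw [map_dst_chain hne hch hlast, List.count_append]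
  simp [List.count_singleton', eq_comm]

lemma count_src_cons {p : List E} (hne : p ≠ []) (v : V) :
    (p.map (src : E → V)).count v
      = (if src (p.head hne) = v then 1 else 0) + ((p.map (src : E → V)).tail).count v := by
  cases p with
  | nil => simp at hne
  | cons f rest =>
    simp only [List.map_cons, List.head_cons, List.tail_cons, List.count_cons]
    rw [add_comm]
    by_cases h : src f = v
    · simp [h]
    · simp [h, Ne.symm h]



/-- Counting arcs of a nodup list by an indicator sum. -/
lemma sum_ite_count (c : List E) (hnd : c.Nodup) (g : E → V) (v : V) (r : ℝ) :
    ∑ e : E, (if e ∈ c ∧ g e = v then r else 0) = ((c.map g).count v : ℕ) * r := by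
  induction c with
  | nil => simp
  | cons a c ih =>
    have ha : a ∉ c := (List.nodup_cons.mp hnd).1
    have hnd' : c.Nodup := (List.nodup_cons.mp hnd).2
    have key : ∀ e : E, (if e ∈ a :: c ∧ g e = v then r else 0)
        = (if e ∈ c ∧ g e = v then r else 0) + (if e = a ∧ g e = v then r else 0) := by
      intro e
      by_cases h1 : e ∈ c
      · have : e ≠ a := fun h => ha (h ▸ h1)
        simp [h1, this]
      · by_cases h2 : e = a
        · subst h2; simp [h1, ha]
        · simp [h1, h2]
    rw [Finset.sum_congr rfl (fun e _ => key e), Finset.sum_add_distrib, ih hnd']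
    have : ∑ e : E, (if e = a ∧ g e = v then r else 0)
        = if g a = v then r else 0 := by
      rw [Finset.sum_eq_single a]
      · simp
      · intro b _ hb; simp [hb]
      · intro h; exact absurd (Finset.mem_univ a) h
    rw [this, List.map_cons, List.count_cons]
    by_cases h : g a = v
    · simp [h, add_mul, add_comm]
    · have : ¬ (v = g a) := fun hh => h hh.symm
      simp [h, this]

/-- Aggregating a path-indexed quantity into an arc sum, counted by a vertex predicate. -/
lemma sum_agg (P : Finset (List E)) (hnd : ∀ p ∈ P, p.Nodup) (c : List E → ℝ)
    (g : E → V) (v : V) :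
    ∑ e : E, (if g e = v then (∑ p ∈ P, if e ∈ p then c p else 0) else 0)
      = ∑ p ∈ P, ((p.map g).count v : ℕ) * c p := by
  have : ∀ e : E, (if g e = v then (∑ p ∈ P, if e ∈ p then c p else 0) else 0)
      = ∑ p ∈ P, (if e ∈ p ∧ g e = v then c p else 0) := by
    intro e
    by_cases h : g e = v
    · simp only [h, if_true]
      exact Finset.sum_congr rfl fun p _ => by by_cases hp : e ∈ p <;> simp [hp, h]
    · simp only [h, if_false]
      exact (Finset.sum_eq_zero fun p _ => by simp [h]).symm
  rw [Finset.sum_congr rfl (fun e _ => this e), Finset.sum_comm]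
  exact Finset.sum_congr rfl fun p hp => sum_ite_count p (hnd p hp) g v (c p)

lemma stpath_map_src_nodup {s t : V} {p : List E} (hp : IsSTPath src dst s t p) :
    (p.map (src : E → V)).Nodup :=
  (List.nodup_append.mp hp.2.2.2.2).1

lemma stpath_nodup {s t : V} {p : List E} (hp : IsSTPath src dst s t p) : p.Nodup :=
  List.Nodup.of_map src (stpath_map_src_nodup hp)

lemma stpath_t_not_mem {s t : V} {p : List E} (hp : IsSTPath src dst s t p) :
    t ∉ p.map (src : E → V) := by
  have h := (List.nodup_append.mp hp.2.2.2.2).2.2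
  intro hmem
  exact h t hmem t (by simp) rfl

lemma count_path_inner {s t : V} {p : List E} (hp : IsSTPath src dst s t p)
    {v : V} (hvs : v ≠ s) (hvt : v ≠ t) :
    (p.map dst).count v = (p.map (src : E → V)).count v := by
  obtain ⟨hne, hhead, hlast, hch, hnd⟩ := hp
  rw [count_dst_chain hne hch hlast v, count_src_cons hne v]
  have hsrc : src (p.head hne) = s := hhead _ (List.head_mem_head? hne)
  rw [hsrc]
  simp [Ne.symm hvt, Ne.symm hvs]

lemma count_path_t {s t : V} {p : List E}
    (hp : IsSTPath src dst s t p) :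
    (p.map dst).count t = 1 := by
  obtain ⟨hne, hhead, hlast, hch, hnd⟩ := hp
  rw [count_dst_chain hne hch hlast t, if_pos rfl]
  have h0 : (p.map (src : E → V)).count t = 0 :=
    List.count_eq_zero.mpr (stpath_t_not_mem ⟨hne, hhead, hlast, hch, hnd⟩)
  have := ((p.map (src : E → V)).tail_sublist).count_le t
  omega

lemma count_cycle {c : List E} (hne : c ≠ [])
    (hch : c.Chain' fun e f => dst e = src f)
    (hclosed : ∀ e ∈ c.getLast?, ∀ f ∈ c.head?, dst e = src f) (v : V) :
    (c.map dst).count v = (c.map (src : E → V)).count v := by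
  have hlast : ∀ e ∈ c.getLast?, dst e = src (c.head hne) :=
    fun e he => hclosed e he _ (List.head_mem_head? hne)
  rw [count_dst_chain hne hch hlast v, count_src_cons hne v, add_comm]

/-- Subtracting `δ` along a nodup list of arcs changes vertex-indexed sums by the count. -/
lemma sum_sub_ind (x : E → ℝ) (c : List E) (hnd : c.Nodup) (δ : ℝ) (g : E → V) (v : V) :
    ∑ e : E, (if g e = v then (x e - δ * (if e ∈ c then 1 else 0)) else 0)
      = (∑ e : E, if g e = v then x e else 0) - ((c.map g).count v : ℕ) * δ := by
  have key : ∀ e : E, (if g e = v then (x e - δ * (if e ∈ c then 1 else 0)) else 0)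
      = (if g e = v then x e else 0) - (if e ∈ c ∧ g e = v then δ else 0) := by
    intro e
    by_cases h : g e = v
    · by_cases h2 : e ∈ c <;> simp [h, h2, mul_comm]
    · simp [h]
  rw [Finset.sum_congr rfl (fun e _ => key e), Finset.sum_sub_distrib,
    sum_ite_count c hnd g v δ]

lemma conserves_sub {s t : V} (x : E → ℝ) (hc : Conserves src dst s t x)
    (c : List E) (hnd : c.Nodup)
    (hcnt : ∀ v : V, v ≠ s → v ≠ t → (c.map dst).count v = (c.map (src : E → V)).count v)
    (δ : ℝ) :
    Conserves src dst s t (fun e => x e - δ * (if e ∈ c then 1 else 0)) := by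
  intro v hvs hvt
  rw [sum_sub_ind x c hnd δ dst v, sum_sub_ind x c hnd δ src v, hcnt v hvs hvt,
    hc v hvs hvt]

lemma flowVal_sub {t : V} (x : E → ℝ) (c : List E) (hnd : c.Nodup) (δ : ℝ) :
    flowVal dst t (fun e => x e - δ * (if e ∈ c then 1 else 0))
      = flowVal dst t x - ((c.map dst).count t : ℕ) * δ :=
  sum_sub_ind x c hnd δ dst t

lemma walk_back {s t : V} (hds : ∀ e, dst e ≠ s) (hst2 : ∀ e, src e ≠ t)
    (x : E → ℝ) (hx0 : ∀ e, 0 ≤ x e) (hc : Conserves src dst s t x) :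
    ∀ n : ℕ, ∀ p : List E, ∀ hne : p ≠ [], (∀ e ∈ p, 0 < x e) →
    p.Chain' (fun e f => dst e = src f) → (∀ e ∈ p.getLast?, dst e = t) →
    ((p.map (src : E → V)) ++ [t]).Nodup → Fintype.card V ≤ p.length + n →
    (∃ q, IsSTPath src dst s t q ∧ ∀ e ∈ q, 0 < x e) ∨
    (∃ c : List E, c ≠ [] ∧ c.Nodup ∧ (∀ e ∈ c, 0 < x e) ∧
      c.Chain' (fun e f => dst e = src f) ∧
      ∀ e ∈ c.getLast?, ∀ f ∈ c.head?, dst e = src f) := by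
  intro n
  induction n with
  | zero =>
    intro p hne hpos hch hlast hnd hlen
    exfalso
    have h1 : (p.map (src : E → V) ++ [t]).length ≤ Fintype.card V :=
      hnd.length_le_card
    simp only [List.length_append, List.length_map, List.length_singleton] at h1
    omega
  | succ n ih =>
    intro p hne hpos hch hlast hnd hlen
    have hv : src (p.head hne) = src (p.head hne) := rfl
    set v := src (p.head hne) with hvdef
    by_cases hvs : v = s
    · left
      refine ⟨p, ⟨hne, ?_, hlast, hch, hnd⟩, hpos⟩
      intro e he
      have heq : e = p.head hne := by
        rw [List.head?_eq_head hne] at he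
        exact (Option.mem_some_iff.mp he).symm
      rw [heq, ← hvdef]; exact hvs
    · have hvt : v ≠ t := hst2 _
      have hposin : 0 < ∑ e : E, (if dst e = v then x e else 0) := by
        rw [hc v hvs hvt]
        have hmem : p.head hne ∈ p := List.head_mem hne
        calc (0:ℝ) < x (p.head hne) := hpos _ hmem
          _ = (if src (p.head hne) = v then x (p.head hne) else 0) := by
              rw [if_pos hvdef.symm]
          _ ≤ ∑ e : E, (if src e = v then x e else 0) :=
              Finset.single_le_sum (f := fun e : E => if src e = v then x e else 0)
                (fun i _ => by by_cases h : src i = v <;> simp [h, hx0 i])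
                (Finset.mem_univ _)
      obtain ⟨e', he'v, he'pos⟩ : ∃ e', dst e' = v ∧ 0 < x e' := by
        by_contra hcon
        push_neg at hcon
        have hz : ∑ e : E, (if dst e = v then x e else 0) = 0 := by
          apply Finset.sum_eq_zero
          intro e _
          by_cases h : dst e = v
          · have h1 := hcon e h
            have h2 := hx0 e
            simp only [h, if_true]; linarith
          · simp [h]
        rw [hz] at hposin; exact lt_irrefl _ hposin
      set w := src e' with hwdef
      by_cases hwp : w ∈ p.map (src : E → V)
      · -- extract a cycle
        right
        set tk := p.takeWhile (fun a => decide (src a ≠ w)) with htk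
        set dr := p.dropWhile (fun a => decide (src a ≠ w)) with hdr
        have hdrne : dr ≠ [] := by
          intro h
          rw [hdr, List.dropWhile_eq_nil_iff] at h
          obtain ⟨g, hg, hgw⟩ := List.mem_map.mp hwp
          have := h g hg
          simp [hgw] at this
        have hdrsrc : src (dr.head hdrne) = w := by
          have h := List.head?_dropWhile_not (fun a => decide (src a ≠ w)) p
          rw [← hdr, List.head?_eq_head hdrne] at h
          simpa using h
        have hsplit : tk ++ dr = p := by
          rw [htk, hdr]; exact List.takeWhile_append_dropWhile
        have hch2 : (tk ++ dr).Chain' (fun e f => dst e = src f) := by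
          rw [hsplit]; exact hch
        obtain ⟨hchtk, hchdr, hjunc⟩ := List.isChain_append.mp hch2
        have hpnd : p.Nodup := List.Nodup.of_map src (List.nodup_append.mp hnd).1
        refine ⟨e' :: tk, by simp, ?_, ?_, ?_, ?_⟩
        · rw [List.nodup_cons]
          constructor
          · intro hmem
            have := List.mem_takeWhile_imp (htk ▸ hmem)
            simp [← hwdef] at this
          · exact (List.takeWhile_sublist _).nodup hpnd
        · intro e he
          rcases List.mem_cons.mp he with h | h
          · rw [h]; exact he'pos
          · exact hpos _ ((List.takeWhile_sublist _).subset (htk ▸ h))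
        · simp only [List.Chain', List.isChain_cons]
          refine ⟨?_, hchtk⟩
          intro y hy
          have hyp : y = p.head hne := by
            have : p.head? = some y := by
              rw [← hsplit, List.head?_append]
              rw [Option.mem_def] at hy
              simp [hy]
            rw [List.head?_eq_head hne] at this
            exact (Option.some_inj.mp this).symm
          rw [hyp, ← hvdef, he'v]
        · intro a ha f hf
          have hfe : f = e' := by
            simp only [List.head?_cons, Option.mem_some_iff] at hf
            exact hf.symm
          rw [hfe, ← hwdef]
          cases htke : tk with
          | nil =>
            rw [htke] at ha
            simp only [List.getLast?_singleton, Option.mem_some_iff] at ha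
            have h0 : p.takeWhile (fun a => decide (src a ≠ w)) = [] := by
              rw [← htk, htke]
            rw [List.takeWhile_eq_nil_iff] at h0
            have hlen0 : 0 < p.length := List.length_pos_iff.mpr hne
            have h1 := h0 hlen0
            rw [List.get_mk_zero hlen0] at h1
            have hvw : v = w := by
              by_contra hvw
              exact h1 (by simp [← hvdef]; exact hvw)
            rw [← ha, he'v, hvw]
          | cons b tb =>
            rw [htke] at ha
            rw [List.getLast?_cons_cons] at ha
            have ha' : a ∈ tk.getLast? := by rw [htke]; exact ha
            have := hjunc a ha' (dr.head hdrne) (List.head_mem_head? hdrne)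
            rw [this, hdrsrc]
      · -- extend the walk
        apply ih (e' :: p) (by simp)
        · intro e he
          rcases List.mem_cons.mp he with h | h
          · rw [h]; exact he'pos
          · exact hpos _ h
        · simp only [List.Chain', List.isChain_cons]
          refine ⟨?_, hch⟩
          intro y hy
          rw [List.head?_eq_head hne, Option.mem_some_iff] at hy
          rw [← hy, ← hvdef, he'v]
        · intro e he
          cases p with
          | nil => exact absurd rfl hne
          | cons a l =>
            rw [List.getLast?_cons_cons] at he
            exact hlast e he
        · simp only [List.map_cons, List.cons_append, List.nodup_cons]
          refine ⟨?_, hnd⟩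
          rw [List.mem_append]
          rintro (h | h)
          · exact hwp (hwdef ▸ h)
          · simp only [List.mem_singleton] at h
            exact hst2 e' (hwdef ▸ h)
        · simp only [List.length_cons]
          omega

lemma mem_stPaths {s t : V} {p : List E} (hp : IsSTPath src dst s t p) :
    p ∈ stPaths src dst s t := by
  classical
  rw [stPaths, Finset.mem_filter]
  refine ⟨?_, hp⟩
  rw [Finset.mem_image]
  exact ⟨⟨p, stpath_nodup hp⟩, Finset.mem_univ _, rfl⟩

lemma stPaths_spec {s t : V} {p : List E} (hp : p ∈ stPaths src dst s t) :
    IsSTPath src dst s t p := by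
  classical
  rw [stPaths, Finset.mem_filter] at hp
  exact hp.2

lemma flow_decomp {s t : V} (hds : ∀ e, dst e ≠ s) (hst2 : ∀ e, src e ≠ t)
    (x : E → ℝ) (hx0 : ∀ e, 0 ≤ x e) (hc : Conserves src dst s t x) :
    ∃ xP : List E → ℝ, (∀ p, 0 ≤ xP p) ∧ (∀ p, p ∉ stPaths src dst s t → xP p = 0) ∧
      (∀ e, (∑ p ∈ stPaths src dst s t, if e ∈ p then xP p else 0) ≤ x e) ∧
      flowVal dst t x ≤ ∑ p ∈ stPaths src dst s t, xP p := by
  suffices H : ∀ n : ℕ, ∀ x : E → ℝ, (∀ e, 0 ≤ x e) → Conserves src dst s t x →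
      (Finset.univ.filter fun e => 0 < x e).card ≤ n →
      ∃ xP : List E → ℝ, (∀ p, 0 ≤ xP p) ∧ (∀ p, p ∉ stPaths src dst s t → xP p = 0) ∧
        (∀ e, (∑ p ∈ stPaths src dst s t, if e ∈ p then xP p else 0) ≤ x e) ∧
        flowVal dst t x ≤ ∑ p ∈ stPaths src dst s t, xP p by
    exact H _ x hx0 hc le_rfl
  intro n
  induction n with
  | zero =>
    intro x hx0 hc hcard
    refine ⟨fun _ => 0, fun _ => le_rfl, fun _ _ => rfl, fun e => by simp [hx0 e], ?_⟩
    have hzero : ∀ e, x e = 0 := by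
      intro e
      by_contra h
      have hpos : 0 < x e := lt_of_le_of_ne (hx0 e) (Ne.symm h)
      have : e ∈ Finset.univ.filter fun e => 0 < x e := by
        simp [hpos]
      rw [Finset.card_eq_zero.mp (Nat.le_zero.mp hcard)] at this
      exact absurd this (Finset.notMem_empty e)
    have : flowVal dst t x = 0 := by
      rw [flowVal]
      exact Finset.sum_eq_zero fun e _ => by simp [hzero e]
    simp [this]
  | succ n ih =>
    intro x hx0 hc hcard
    by_cases hval : flowVal dst t x ≤ 0
    · refine ⟨fun _ => 0, fun _ => le_rfl, fun _ _ => rfl, fun e => by simp [hx0 e], ?_⟩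
      simpa using hval
    · push_neg at hval
      obtain ⟨e0, he0t, he0pos⟩ : ∃ e0, dst e0 = t ∧ 0 < x e0 := by
        by_contra hcon
        push_neg at hcon
        have hz : flowVal dst t x ≤ 0 := by
          rw [flowVal]
          apply Finset.sum_nonpos
          intro e _
          by_cases h : dst e = t
          · have h1 := hcon e h
            have h2 := hx0 e
            simp only [h, if_true]; linarith
          · simp [h]
        linarith
      have hwb := walk_back hds hst2 x hx0 hc (Fintype.card V) [e0] (by simp)
        (by intro e he; simp at he; subst he; exact he0pos)
        (List.isChain_singleton e0)
        (by intro e he; simp at he; subst he; exact he0t)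
        (by simp [hst2 e0])
        (by simp)
      -- common subtraction construction
      have main : ∀ c : List E, c ≠ [] → c.Nodup → (∀ e ∈ c, 0 < x e) →
          (∀ v : V, v ≠ s → v ≠ t →
            (c.map dst).count v = (c.map (src : E → V)).count v) →
          ∃ δ : ℝ, 0 < δ ∧ (∀ e ∈ c, δ ≤ x e) ∧
          ∃ xP' : List E → ℝ, (∀ p, 0 ≤ xP' p) ∧
            (∀ p, p ∉ stPaths src dst s t → xP' p = 0) ∧
            (∀ e, (∑ p ∈ stPaths src dst s t, if e ∈ p then xP' p else 0)
              ≤ x e - δ * (if e ∈ c then 1 else 0)) ∧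
            flowVal dst t x - ((c.map dst).count t : ℕ) * δ
              ≤ ∑ p ∈ stPaths src dst s t, xP' p := by
        intro c hcne hcnd hcpos hccnt
        have hFne : c.toFinset.Nonempty := by
          cases c with
          | nil => exact absurd rfl hcne
          | cons a l => exact ⟨a, by simp⟩
        set δ := c.toFinset.inf' hFne x with hδ
        have hδpos : 0 < δ := by
          rw [hδ, Finset.lt_inf'_iff]
          intro e he
          exact hcpos e (List.mem_toFinset.mp he)
        have hδle : ∀ e ∈ c, δ ≤ x e := fun e he =>
          Finset.inf'_le x (List.mem_toFinset.mpr he)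
        obtain ⟨e1, he1, he1eq⟩ := Finset.exists_mem_eq_inf' hFne x
        set x' := fun e => x e - δ * (if e ∈ c then 1 else 0) with hx'
        have hx'0 : ∀ e, 0 ≤ x' e := by
          intro e
          rw [hx']
          by_cases h : e ∈ c
          · simp only [h, if_true, mul_one]
            linarith [hδle e h]
          · simp [h, hx0 e]
        have hx'c : Conserves src dst s t x' :=
          conserves_sub x hc c hcnd hccnt δ
        have hsub : (Finset.univ.filter fun e => 0 < x' e)
            ⊂ (Finset.univ.filter fun e => 0 < x e) := by
          rw [Finset.ssubset_iff_of_subset]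
          · refine ⟨e1, ?_, ?_⟩
            · simp only [Finset.mem_filter, Finset.mem_univ, true_and]
              exact hcpos e1 (List.mem_toFinset.mp he1)
            · simp only [Finset.mem_filter, Finset.mem_univ, true_and, not_lt]
              rw [hx']
              simp only [List.mem_toFinset.mp he1, if_true, mul_one]
              rw [← he1eq]; linarith
          · intro e he
            simp only [Finset.mem_filter, Finset.mem_univ, true_and] at he ⊢
            rw [hx'] at he
            by_cases h : e ∈ c
            · simp only [h, if_true, mul_one] at he; linarith
            · simpa [h] using he
        obtain ⟨xP', h1, h2, h3, h4⟩ := ih x' hx'0 hx'c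
          (by have := Finset.card_lt_card hsub; omega)
        refine ⟨δ, hδpos, hδle, xP', h1, h2, ?_, ?_⟩
        · intro e
          have := h3 e
          rw [hx'] at this
          exact this
        · have := h4
          rw [hx', flowVal_sub x c hcnd δ] at this
          exact this
      rcases hwb with ⟨q, hq, hqpos⟩ | ⟨c, hcne, hcnd, hcpos, hcch, hcclosed⟩
      · -- path case
        obtain ⟨δ, hδpos, hδle, xP', h1, h2, h3, h4⟩ := main q hq.1
          (stpath_nodup hq) hqpos (fun v hvs hvt => count_path_inner hq hvs hvt)
        have hqmem : q ∈ stPaths src dst s t := mem_stPaths hq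
        have hcnt1 : ((q.map dst).count t : ℕ) = 1 := count_path_t hq
        refine ⟨fun r => xP' r + (if r = q then δ else 0), ?_, ?_, ?_, ?_⟩
        · intro p
          by_cases h : p = q
          · simp only [h, if_true]; linarith [h1 q]
          · simp [h, h1 p]
        · intro p hp
          have : p ≠ q := fun h => hp (h ▸ hqmem)
          simp [this, h2 p hp]
        · intro e
          have hpoint : ∀ p ∈ stPaths src dst s t,
              (if e ∈ p then (xP' p + (if p = q then δ else 0)) else 0)
              = (if e ∈ p then xP' p else 0) + (if p = q ∧ e ∈ p then δ else 0) := by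
            intro p _
            by_cases h : e ∈ p
            · by_cases h2 : p = q
              · subst h2; simp [h]
              · simp [h, h2]
            · simp [h]
          rw [Finset.sum_congr rfl hpoint, Finset.sum_add_distrib]
          have hB : ∑ p ∈ stPaths src dst s t, (if p = q ∧ e ∈ p then δ else 0)
              = (if e ∈ q then δ else 0) := by
            rw [Finset.sum_eq_single q]
            · by_cases h : e ∈ q <;> simp [h]
            · intro b _ hb; simp [hb]
            · intro h; exact absurd hqmem h
          rw [hB]
          have h3e := h3 e
          by_cases h : e ∈ q
          · simp only [h, if_true, mul_one] at h3e ⊢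
            linarith
          · simp only [h, if_false, mul_zero] at h3e ⊢
            linarith
        · have hsum : ∑ p ∈ stPaths src dst s t, (xP' p + (if p = q then δ else 0))
              = (∑ p ∈ stPaths src dst s t, xP' p) + δ := by
            rw [Finset.sum_add_distrib]
            congr 1
            rw [Finset.sum_eq_single q]
            · simp
            · intro b _ hb; simp [hb]
            · intro h; exact absurd hqmem h
          rw [hsum]
          rw [hcnt1] at h4
          simp only [Nat.cast_one, one_mul] at h4
          linarith
      · -- cycle case
        obtain ⟨δ, hδpos, hδle, xP', h1, h2, h3, h4⟩ := main c hcne hcnd hcpos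
          (fun v hvs hvt => count_cycle hcne hcch hcclosed v)
        have hcnt0 : ((c.map dst).count t : ℕ) = 0 := by
          rw [count_cycle hcne hcch hcclosed t, List.count_eq_zero]
          intro hmem
          obtain ⟨e, _, hee⟩ := List.mem_map.mp hmem
          exact hst2 e hee
        refine ⟨xP', h1, h2, ?_, ?_⟩
        · intro e
          refine le_trans (h3 e) ?_
          by_cases h : e ∈ c
          · simp only [h, if_true, mul_one]; linarith
          · simp [h]
        · rw [hcnt0] at h4
          simpa using h4

lemma conserves_zero {s t : V} : Conserves src dst s t (fun _ => (0:ℝ)) := by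
  intro v _ _; simp

/-- membership of 0 in the payoffF defining set -/
lemma payoffF_set_zero_mem {s t : V} (μ : Finset E) (x : E → ℝ) (hx0 : ∀ e, 0 ≤ x e) :
    (0:ℝ) ∈ {z : ℝ | ∃ y : E → ℝ, (∀ e, 0 ≤ y e) ∧ (∀ e ∉ μ, y e ≤ x e) ∧
      (∀ e ∈ μ, y e = 0) ∧ Conserves src dst s t y ∧ z = flowVal dst t y} := by
  refine ⟨fun _ => 0, fun _ => le_rfl, fun e _ => hx0 e, fun _ _ => rfl,
    conserves_zero, ?_⟩
  simp [flowVal]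

lemma payoffF_set_bddAbove {s t : V} (u : E → ℝ) (hu : ∀ e, 0 ≤ u e)
    (μ : Finset E) (x : E → ℝ) (hxu : ∀ e, x e ≤ u e) :
    ∀ z ∈ {z : ℝ | ∃ y : E → ℝ, (∀ e, 0 ≤ y e) ∧ (∀ e ∉ μ, y e ≤ x e) ∧
      (∀ e ∈ μ, y e = 0) ∧ Conserves src dst s t y ∧ z = flowVal dst t y},
      z ≤ ∑ e : E, u e := by
  rintro z ⟨y, hy0, hyx, hyμ, hyc, rfl⟩
  rw [flowVal]
  apply Finset.sum_le_sum
  intro e _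
  have hyu : y e ≤ u e := by
    by_cases h : e ∈ μ
    · rw [hyμ e h]; exact hu e
    · exact le_trans (hyx e h) (hxu e)
  by_cases h : dst e = t
  · simp [h, hyu]
  · simp [h, hu e]

lemma payoffF_nonneg {s t : V} (u : E → ℝ) (hu : ∀ e, 0 ≤ u e)
    (μ : Finset E) (x : E → ℝ) (hx0 : ∀ e, 0 ≤ x e) (hxu : ∀ e, x e ≤ u e) :
    0 ≤ payoffF src dst s t μ x :=
  le_csSup ⟨∑ e : E, u e, fun z hz => payoffF_set_bddAbove u hu μ x hxu z hz⟩
    (payoffF_set_zero_mem μ x hx0)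

lemma payoffF_le {s t : V} (u : E → ℝ) (hu : ∀ e, 0 ≤ u e)
    (μ : Finset E) (x : E → ℝ) (hx0 : ∀ e, 0 ≤ x e) (hxu : ∀ e, x e ≤ u e) :
    payoffF src dst s t μ x ≤ ∑ e : E, u e :=
  csSup_le ⟨0, payoffF_set_zero_mem μ x hx0⟩
    (payoffF_set_bddAbove u hu μ x hxu)

lemma payoffG_eq {s t : V} (μ : Finset E) (xP : List E → ℝ) :
    payoffG src dst s t μ xP = ∑ p ∈ stPaths src dst s t,
      (if (p.countP fun e => decide (e ∈ μ)) = 0 then xP p else 0) := by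
  rw [payoffG]
  apply Finset.sum_congr rfl
  intro p _
  by_cases h : (p.countP fun e => decide (e ∈ μ)) = 0
  · simp [h]
  · have h1 : 1 ≤ (p.countP fun e => decide (e ∈ μ)) := Nat.one_le_iff_ne_zero.mpr h
    have h2 : (1:ℝ) - ((p.countP fun e => decide (e ∈ μ)) : ℕ) ≤ 0 := by
      have : (1:ℝ) ≤ ((p.countP fun e => decide (e ∈ μ)) : ℕ) := by exact_mod_cast h1
      linarith
    rw [if_neg h, max_eq_left h2, zero_mul]

lemma countP_mem_sum {p : List E} (hnd : p.Nodup) (μ : Finset E) :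
    (((p.countP fun e => decide (e ∈ μ)) : ℕ) : ℝ) = ∑ e ∈ μ, (if e ∈ p then (1:ℝ) else 0) := by
  induction p with
  | nil => simp
  | cons a q ih =>
    have ha : a ∉ q := (List.nodup_cons.mp hnd).1
    have hq : q.Nodup := (List.nodup_cons.mp hnd).2
    rw [List.countP_cons]
    have hpoint : ∀ e ∈ μ, (if e ∈ a :: q then (1:ℝ) else 0)
        = (if e ∈ q then (1:ℝ) else 0) + (if e = a then (1:ℝ) else 0) := by
      intro e _
      by_cases h1 : e ∈ q
      · have : e ≠ a := fun h => ha (h ▸ h1)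
        simp [h1, this]
      · by_cases h2 : e = a
        · subst h2; simp [h1]
        · simp [h1, h2]
    rw [Finset.sum_congr rfl hpoint, Finset.sum_add_distrib, ← ih hq]
    have : ∑ e ∈ μ, (if e = a then (1:ℝ) else 0) = if a ∈ μ then (1:ℝ) else 0 := by
      rw [Finset.sum_ite_eq' μ a (fun _ => (1:ℝ))]
    rw [this]
    by_cases h : a ∈ μ <;> simp [h]

/-- The total value of a path flow is at most the total capacity. -/
lemma pathflow_total_le {s t : V} (u : E → ℝ) (hu : ∀ e, 0 ≤ u e) (xP : List E → ℝ)
    (hxP : IsPathFlow src dst s t u xP) :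
    ∑ p ∈ stPaths src dst s t, xP p ≤ ∑ e : E, u e := by
  obtain ⟨h0, hsupp, hcap⟩ := hxP
  have step1 : ∀ p ∈ stPaths src dst s t, xP p ≤ ∑ e : E, (if e ∈ p then xP p else 0) := by
    intro p hp
    have hne : p ≠ [] := (stPaths_spec hp).1
    have hmem : p.head hne ∈ p := List.head_mem hne
    calc xP p = (if p.head hne ∈ p then xP p else 0) := by rw [if_pos hmem]
      _ ≤ ∑ e : E, (if e ∈ p then xP p else 0) :=
        Finset.single_le_sum (f := fun e : E => if e ∈ p then xP p else 0)
          (fun i _ => by by_cases h : i ∈ p <;> simp [h, h0 p]) (Finset.mem_univ _)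
  calc ∑ p ∈ stPaths src dst s t, xP p
      ≤ ∑ p ∈ stPaths src dst s t, ∑ e : E, (if e ∈ p then xP p else 0) :=
        Finset.sum_le_sum step1
    _ = ∑ e : E, ∑ p ∈ stPaths src dst s t, (if e ∈ p then xP p else 0) := Finset.sum_comm
    _ ≤ ∑ e : E, u e := Finset.sum_le_sum fun e _ => hcap e

lemma payoffG_nonneg {s t : V} (μ : Finset E) (xP : List E → ℝ) (h0 : ∀ p, 0 ≤ xP p) :
    0 ≤ payoffG src dst s t μ xP := by
  rw [payoffG]
  apply Finset.sum_nonneg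
  intro p _
  exact mul_nonneg (le_max_left _ _) (h0 p)

lemma payoffG_le_total {s t : V} (μ : Finset E) (xP : List E → ℝ) (h0 : ∀ p, 0 ≤ xP p) :
    payoffG src dst s t μ xP ≤ ∑ p ∈ stPaths src dst s t, xP p := by
  rw [payoffG]
  apply Finset.sum_le_sum
  intro p _
  have : max 0 (1 - (((p.countP fun e => decide (e ∈ μ)) : ℕ) : ℝ)) ≤ 1 := by
    apply max_le
    · linarith
    · have : (0:ℝ) ≤ ((p.countP fun e => decide (e ∈ μ)) : ℕ) := Nat.cast_nonneg _
      linarith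
  calc max 0 (1 - (((p.countP fun e => decide (e ∈ μ)) : ℕ) : ℝ)) * xP p
      ≤ 1 * xP p := mul_le_mul_of_nonneg_right this (h0 p)
    _ = xP p := one_mul _

/-- From a path flow, an arc flow dominating all payoffs. -/
lemma pathflow_to_flow {s t : V} (u : E → ℝ) (hs2 : ∀ e, dst e ≠ s) (ht2 : ∀ e, src e ≠ t)
    (hu : ∀ e, 0 ≤ u e) (xP : List E → ℝ) (hxP : IsPathFlow src dst s t u xP) :
    ∃ x : E → ℝ, IsFlow src dst s t u x ∧
      ∀ μ : Finset E, payoffG src dst s t μ xP ≤ payoffF src dst s t μ x := by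
  obtain ⟨h0, hsupp, hcap⟩ := hxP
  set P := stPaths src dst s t with hP
  have hPnd : ∀ p ∈ P, p.Nodup := fun p hp => stpath_nodup (stPaths_spec hp)
  set x := fun e => ∑ p ∈ P, (if e ∈ p then xP p else 0) with hx
  have hx0 : ∀ e, 0 ≤ x e := by
    intro e
    apply Finset.sum_nonneg
    intro p _
    by_cases h : e ∈ p <;> simp [h, h0 p]
  have hxu : ∀ e, x e ≤ u e := hcap
  have hagg : ∀ (c : List E → ℝ) (g : E → V) (v : V),
      ∑ e : E, (if g e = v then (∑ p ∈ P, if e ∈ p then c p else 0) else 0)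
        = ∑ p ∈ P, ((p.map g).count v : ℕ) * c p := fun c g v => sum_agg P hPnd c g v
  have hcons : ∀ (c : List E → ℝ), Conserves src dst s t
      (fun e => ∑ p ∈ P, (if e ∈ p then c p else 0)) := by
    intro c v hvs hvt
    rw [hagg c dst v, hagg c src v]
    apply Finset.sum_congr rfl
    intro p hp
    rw [count_path_inner (stPaths_spec hp) hvs hvt]
  have hval : ∀ (c : List E → ℝ), flowVal dst t
      (fun e => ∑ p ∈ P, (if e ∈ p then c p else 0)) = ∑ p ∈ P, c p := by
    intro c
    rw [flowVal, hagg c dst t]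
    apply Finset.sum_congr rfl
    intro p hp
    rw [count_path_t (stPaths_spec hp)]
    simp
  refine ⟨x, ⟨hx0, hxu, hcons xP⟩, ?_⟩
  intro μ
  set c' : List E → ℝ := fun p => if (p.countP fun e => decide (e ∈ μ)) = 0 then xP p else 0
    with hc'
  set y := fun e => ∑ p ∈ P, (if e ∈ p then c' p else 0) with hy
  have hy0 : ∀ e, 0 ≤ y e := by
    intro e
    apply Finset.sum_nonneg
    intro p _
    by_cases h : e ∈ p
    · rw [if_pos h, hc']
      dsimp only
      split
      · exact h0 p
      · exact le_rfl
    · rw [if_neg h]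
  have hyx : ∀ e, y e ≤ x e := by
    intro e
    apply Finset.sum_le_sum
    intro p _
    by_cases h : e ∈ p
    · rw [if_pos h, if_pos h, hc']
      dsimp only
      split
      · exact le_rfl
      · exact h0 p
    · simp [h]
  have hyμ : ∀ e ∈ μ, y e = 0 := by
    intro e he
    apply Finset.sum_eq_zero
    intro p _
    by_cases h : e ∈ p
    · have hpos : 0 < p.countP fun a => decide (a ∈ μ) :=
        List.countP_pos_iff.mpr ⟨e, h, by simpa using he⟩
      have hne2 : (p.countP fun a => decide (a ∈ μ)) ≠ 0 := Nat.pos_iff_ne_zero.mp hpos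
      rw [if_pos h, hc']
      dsimp only
      rw [if_neg hne2]
    · simp [h]
  have hG : payoffG src dst s t μ xP = flowVal dst t y := by
    rw [payoffG_eq, hval c']
  rw [hG]
  apply le_csSup ⟨∑ e : E, u e, fun z hz => payoffF_set_bddAbove u hu μ x hxu z hz⟩
  exact ⟨y, hy0, fun e _ => hyx e, hyμ, hcons c', rfl⟩

lemma zero_isFlow {s t : V} (u : E → ℝ) (hu : ∀ e, 0 ≤ u e) :
    IsFlow src dst s t u (fun _ => 0) :=
  ⟨fun _ => le_rfl, fun e => hu e, conserves_zero⟩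

lemma zero_isPathFlow {s t : V} (u : E → ℝ) (hu : ∀ e, 0 ≤ u e) :
    IsPathFlow src dst s t u (fun _ => 0) :=
  ⟨fun _ => le_rfl, fun _ _ => rfl, fun e => by simp [hu e]⟩

lemma payoffG_zero {s t : V} (μ : Finset E) :
    payoffG src dst s t μ (fun _ => 0) = 0 := by
  simp [payoffG]

lemma dirac_isDist {Γ : ℕ} {μ0 : Finset E} (h : μ0 ∈ Scenarios E Γ) :
    IsDist E Γ (fun μ => if μ = μ0 then (1:ℝ) else 0) := by
  refine ⟨fun μ => by by_cases hh : μ = μ0 <;> simp [hh], ?_, ?_⟩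
  · intro μ hμ
    have : μ ≠ μ0 := fun hh => hμ (hh ▸ h)
    simp [this]
  · rw [Finset.sum_ite_eq' (Scenarios E Γ) μ0 (fun _ => (1:ℝ))]
    simp [h]

lemma dirac_sum {Γ : ℕ} {μ0 : Finset E} (h : μ0 ∈ Scenarios E Γ) (r : Finset E → ℝ) :
    ∑ μ ∈ Scenarios E Γ, (if μ = μ0 then (1:ℝ) else 0) * r μ = r μ0 := by
  have : ∀ μ ∈ Scenarios E Γ, (if μ = μ0 then (1:ℝ) else 0) * r μ
      = if μ = μ0 then r μ else 0 := by
    intro μ _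
    by_cases hh : μ = μ0 <;> simp [hh]
  rw [Finset.sum_congr rfl this, Finset.sum_ite_eq' (Scenarios E Γ) μ0 r]
  simp [h]

lemma wsum_payoffF_nonneg {s t : V} (u : E → ℝ) (hu : ∀ e, 0 ≤ u e) {Γ : ℕ}
    {α : Finset E → ℝ} (hα : IsDist E Γ α) {x : E → ℝ} (hx : IsFlow src dst s t u x) :
    0 ≤ ∑ μ ∈ Scenarios E Γ, α μ * payoffF src dst s t μ x :=
  Finset.sum_nonneg fun μ _ => mul_nonneg (hα.1 μ)
    (payoffF_nonneg u hu μ x hx.1 hx.2.1)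

lemma wsum_payoffF_le {s t : V} (u : E → ℝ) (hu : ∀ e, 0 ≤ u e) {Γ : ℕ}
    {α : Finset E → ℝ} (hα : IsDist E Γ α) {x : E → ℝ} (hx : IsFlow src dst s t u x) :
    ∑ μ ∈ Scenarios E Γ, α μ * payoffF src dst s t μ x ≤ ∑ e : E, u e := by
  calc ∑ μ ∈ Scenarios E Γ, α μ * payoffF src dst s t μ x
      ≤ ∑ μ ∈ Scenarios E Γ, α μ * (∑ e : E, u e) :=
        Finset.sum_le_sum fun μ _ => mul_le_mul_of_nonneg_left
          (payoffF_le u hu μ x hx.1 hx.2.1) (hα.1 μ)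
    _ = (∑ μ ∈ Scenarios E Γ, α μ) * (∑ e : E, u e) := (Finset.sum_mul _ _ _).symm
    _ = ∑ e : E, u e := by rw [hα.2.2, one_mul]

lemma wsum_payoffG_nonneg {s t : V} {Γ : ℕ}
    {α : Finset E → ℝ} (hα : IsDist E Γ α) {xP : List E → ℝ} (h0 : ∀ p, 0 ≤ xP p) :
    0 ≤ ∑ μ ∈ Scenarios E Γ, α μ * payoffG src dst s t μ xP :=
  Finset.sum_nonneg fun μ _ => mul_nonneg (hα.1 μ) (payoffG_nonneg μ xP h0)

lemma wsum_payoffG_le {s t : V} (u : E → ℝ) (hu : ∀ e, 0 ≤ u e) {Γ : ℕ}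
    {α : Finset E → ℝ} (hα : IsDist E Γ α) {xP : List E → ℝ}
    (hxP : IsPathFlow src dst s t u xP) :
    ∑ μ ∈ Scenarios E Γ, α μ * payoffG src dst s t μ xP ≤ ∑ e : E, u e := by
  calc ∑ μ ∈ Scenarios E Γ, α μ * payoffG src dst s t μ xP
      ≤ ∑ μ ∈ Scenarios E Γ, α μ * (∑ e : E, u e) :=
        Finset.sum_le_sum fun μ _ => mul_le_mul_of_nonneg_left
          (le_trans (payoffG_le_total μ xP hxP.1) (pathflow_total_le u hu xP hxP)) (hα.1 μ)
    _ = (∑ μ ∈ Scenarios E Γ, α μ) * (∑ e : E, u e) := (Finset.sum_mul _ _ _).symm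
    _ = ∑ e : E, u e := by rw [hα.2.2, one_mul]

/-- Lower bound on the path payoff for a decomposition with per-arc bound θ. -/
lemma payoffG_lower {s t : V} {Γ : ℕ} {μ : Finset E} (hμ : μ ∈ Scenarios E Γ)
    (θ : ℝ) (xP : List E → ℝ) (h0 : ∀ p, 0 ≤ xP p)
    (hcap : ∀ e : E, (∑ p ∈ stPaths src dst s t, if e ∈ p then xP p else 0) ≤ θ) :
    (∑ p ∈ stPaths src dst s t, xP p) - Γ * θ ≤ payoffG src dst s t μ xP := by
  have hΓcard : μ.card = Γ := by
    have := Finset.mem_filter.mp hμ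
    exact this.2
  have step1 : ∑ p ∈ stPaths src dst s t,
      (1 - (((p.countP fun e => decide (e ∈ μ)) : ℕ) : ℝ)) * xP p
      ≤ payoffG src dst s t μ xP := by
    rw [payoffG]
    apply Finset.sum_le_sum
    intro p _
    exact mul_le_mul_of_nonneg_right (le_max_right _ _) (h0 p)
  have step2 : ∑ p ∈ stPaths src dst s t,
      (((p.countP fun e => decide (e ∈ μ)) : ℕ) : ℝ) * xP p ≤ Γ * θ := by
    have hrw : ∀ p ∈ stPaths src dst s t,
        (((p.countP fun e => decide (e ∈ μ)) : ℕ) : ℝ) * xP p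
        = ∑ e ∈ μ, (if e ∈ p then xP p else 0) := by
      intro p hp
      rw [countP_mem_sum (stpath_nodup (stPaths_spec hp)) μ, Finset.sum_mul]
      apply Finset.sum_congr rfl
      intro e _
      by_cases h : e ∈ p <;> simp [h]
    rw [Finset.sum_congr rfl hrw, Finset.sum_comm]
    calc ∑ e ∈ μ, ∑ p ∈ stPaths src dst s t, (if e ∈ p then xP p else 0)
        ≤ ∑ e ∈ μ, θ := Finset.sum_le_sum fun e _ => hcap e
      _ = Γ * θ := by rw [Finset.sum_const, hΓcard, nsmul_eq_mul]
  have step3 : ∑ p ∈ stPaths src dst s t,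
      (1 - (((p.countP fun e => decide (e ∈ μ)) : ℕ) : ℝ)) * xP p
      = (∑ p ∈ stPaths src dst s t, xP p)
        - ∑ p ∈ stPaths src dst s t,
            (((p.countP fun e => decide (e ∈ μ)) : ℕ) : ℝ) * xP p := by
    rw [← Finset.sum_sub_distrib]
    apply Finset.sum_congr rfl
    intro p _
    ring
  linarith [step1, step3 ▸ step1]

end Helpers

/-- `Z_LO ≤ Z_RNI^Path ≤ Z_RNI ≤ Z_NI`. -/
theorem Z_LO_le_Z_RNIPath_le_Z_RNI_le_Z_NI (src dst : E → V) (s t : V) (u : E → ℝ) (Γ : ℕ)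
    (hnet : IsNetwork src dst s t u) (hΓ1 : 1 ≤ Γ) (hΓE : Γ ≤ Fintype.card E) :
    Z_LO src dst s t u Γ ≤ Z_RNIPath src dst s t u Γ ∧
    Z_RNIPath src dst s t u Γ ≤ Z_RNI src dst s t u Γ ∧
    Z_RNI src dst s t u Γ ≤ Z_NI src dst s t u Γ := by
  obtain ⟨hst, hds, hst2, hu⟩ := hnet
  -- a scenario exists
  obtain ⟨μ0, hμ0sub, hμ0card⟩ := Finset.exists_subset_card_eq
    (le_trans hΓE (le_of_eq (Finset.card_univ).symm))
  have hμ0 : μ0 ∈ Scenarios E Γ := Finset.mem_filter.mpr ⟨Finset.mem_univ _, hμ0card⟩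
  set α0 : Finset E → ℝ := fun μ => if μ = μ0 then (1:ℝ) else 0 with hα0
  have hα0dist : IsDist E Γ α0 := dirac_isDist hμ0
  set U : ℝ := ∑ e : E, u e with hU
  -- the three defining sets
  set Sni := {z : ℝ | ∃ μ ∈ Scenarios E Γ,
    z = sSup {w : ℝ | ∃ x : E → ℝ, IsFlow src dst s t u x ∧
      w = payoffF src dst s t μ x}} with hSni
  set Srni := {z : ℝ | ∃ α : Finset E → ℝ, IsDist E Γ α ∧
    z = sSup {w : ℝ | ∃ x : E → ℝ, IsFlow src dst s t u x ∧
      w = ∑ μ ∈ Scenarios E Γ, α μ * payoffF src dst s t μ x}} with hSrni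
  set Spath := {z : ℝ | ∃ α : Finset E → ℝ, IsDist E Γ α ∧
    z = sSup {w : ℝ | ∃ xP : List E → ℝ, IsPathFlow src dst s t u xP ∧
      w = ∑ μ ∈ Scenarios E Γ, α μ * payoffG src dst s t μ xP}} with hSpath
  -- boundedness facts for inner arc sets
  have harc_bdd : ∀ α : Finset E → ℝ, IsDist E Γ α →
      BddAbove {w : ℝ | ∃ x : E → ℝ, IsFlow src dst s t u x ∧
        w = ∑ μ ∈ Scenarios E Γ, α μ * payoffF src dst s t μ x} := by
    intro α hα
    refine ⟨U, ?_⟩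
    rintro w ⟨x, hx, rfl⟩
    exact wsum_payoffF_le u hu hα hx
  have harc_mem : ∀ α : Finset E → ℝ,
      (∑ μ ∈ Scenarios E Γ, α μ * payoffF src dst s t μ (fun _ => (0:ℝ)))
        ∈ {w : ℝ | ∃ x : E → ℝ, IsFlow src dst s t u x ∧
          w = ∑ μ ∈ Scenarios E Γ, α μ * payoffF src dst s t μ x} :=
    fun α => ⟨fun _ => 0, zero_isFlow u hu, rfl⟩
  have hrni_lb : ∀ z ∈ Srni, (0:ℝ) ≤ z := by
    rintro z ⟨α, hα, rfl⟩
    refine le_trans ?_ (le_csSup (harc_bdd α hα) (harc_mem α))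
    exact wsum_payoffF_nonneg u hu hα (zero_isFlow u hu)
  -- boundedness facts for inner path sets
  have hpath_bdd : ∀ α : Finset E → ℝ, IsDist E Γ α →
      BddAbove {w : ℝ | ∃ xP : List E → ℝ, IsPathFlow src dst s t u xP ∧
        w = ∑ μ ∈ Scenarios E Γ, α μ * payoffG src dst s t μ xP} := by
    intro α hα
    refine ⟨U, ?_⟩
    rintro w ⟨xP, hxP, rfl⟩
    exact wsum_payoffG_le u hu hα hxP
  have hpath_mem : ∀ α : Finset E → ℝ,
      (∑ μ ∈ Scenarios E Γ, α μ * payoffG src dst s t μ (fun _ => (0:ℝ)))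
        ∈ {w : ℝ | ∃ xP : List E → ℝ, IsPathFlow src dst s t u xP ∧
          w = ∑ μ ∈ Scenarios E Γ, α μ * payoffG src dst s t μ xP} :=
    fun α => ⟨fun _ => 0, zero_isPathFlow u hu, rfl⟩
  have hpath_lb : ∀ z ∈ Spath, (0:ℝ) ≤ z := by
    rintro z ⟨α, hα, rfl⟩
    refine le_trans ?_ (le_csSup (hpath_bdd α hα) (hpath_mem α))
    exact wsum_payoffG_nonneg hα (fun _ => le_rfl)
  have hpath_ne : Spath.Nonempty := ⟨_, α0, hα0dist, rfl⟩
  -- ===== Z_RNI ≤ Z_NI =====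
  have h3 : Z_RNI src dst s t u Γ ≤ Z_NI src dst s t u Γ := by
    rw [Z_RNI, Z_NI]
    apply csInf_le_csInf
    · exact ⟨0, hrni_lb⟩
    · exact ⟨_, μ0, hμ0, rfl⟩
    · rintro z ⟨μ1, hμ1, rfl⟩
      refine ⟨fun μ => if μ = μ1 then (1:ℝ) else 0, dirac_isDist hμ1, ?_⟩
      congr 1
      ext w
      constructor
      · rintro ⟨x, hx, rfl⟩
        exact ⟨x, hx, (dirac_sum hμ1 (fun μ => payoffF src dst s t μ x)).symm⟩
      · rintro ⟨x, hx, rfl⟩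
        exact ⟨x, hx, (dirac_sum hμ1 (fun μ => payoffF src dst s t μ x))⟩
  -- ===== Z_RNIPath ≤ Z_RNI =====
  have h2 : Z_RNIPath src dst s t u Γ ≤ Z_RNI src dst s t u Γ := by
    rw [Z_RNIPath, Z_RNI]
    apply le_csInf
    · exact ⟨_, α0, hα0dist, rfl⟩
    · rintro z ⟨α, hα, rfl⟩
      refine le_trans (csInf_le ⟨0, hpath_lb⟩ (⟨α, hα, rfl⟩ : _ ∈ Spath)) ?_
      apply csSup_le
      · exact ⟨_, hpath_mem α⟩
      · rintro w ⟨xP, hxP, rfl⟩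
        obtain ⟨x, hx, hdom⟩ := pathflow_to_flow u hds hst2 hu xP hxP
        refine le_trans ?_ (le_csSup (harc_bdd α hα) ⟨x, hx, rfl⟩)
        apply Finset.sum_le_sum
        intro μ _
        exact mul_le_mul_of_nonneg_left (hdom μ) (hα.1 μ)
  -- ===== Z_LO ≤ Z_RNIPath =====
  have h1 : Z_LO src dst s t u Γ ≤ Z_RNIPath src dst s t u Γ := by
    rw [Z_LO, Z_RNIPath]
    apply le_csInf
    · exact ⟨_, α0, hα0dist, rfl⟩
    · rintro z ⟨α, hα, rfl⟩
      apply csSup_le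
      · exact ⟨_, 0, le_rfl, rfl⟩
      · rintro z' ⟨θ, hθ, rfl⟩
        rw [Z_LOAt]
        apply csSup_le
        · refine ⟨_, fun _ => 0, zero_isFlow u hu, fun e => hθ, rfl⟩
        · rintro v ⟨x, hx, hxθ, rfl⟩
          obtain ⟨xP, hxP0, hxPsupp, hxPcap, hxPval⟩ :=
            flow_decomp hds hst2 x hx.1 hx.2.2
          have hxPflow : IsPathFlow src dst s t u xP :=
            ⟨hxP0, hxPsupp, fun e => le_trans (hxPcap e) (hx.2.1 e)⟩
          have hcapθ : ∀ e : E,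
              (∑ p ∈ stPaths src dst s t, if e ∈ p then xP p else 0) ≤ θ :=
            fun e => le_trans (hxPcap e) (hxθ e)
          have hper : ∀ μ ∈ Scenarios E Γ,
              flowVal dst t x - (Γ : ℝ) * θ ≤ payoffG src dst s t μ xP := by
            intro μ hμ
            have := payoffG_lower hμ θ xP hxP0 hcapθ
            linarith
          have hw : flowVal dst t x - (Γ : ℝ) * θ
              ≤ ∑ μ ∈ Scenarios E Γ, α μ * payoffG src dst s t μ xP := by
            calc flowVal dst t x - (Γ : ℝ) * θ
                = (∑ μ ∈ Scenarios E Γ, α μ) * (flowVal dst t x - (Γ : ℝ) * θ) := by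
                  rw [hα.2.2, one_mul]
              _ = ∑ μ ∈ Scenarios E Γ, α μ * (flowVal dst t x - (Γ : ℝ) * θ) :=
                  Finset.sum_mul _ _ _
              _ ≤ ∑ μ ∈ Scenarios E Γ, α μ * payoffG src dst s t μ xP :=
                  Finset.sum_le_sum fun μ hμ =>
                    mul_le_mul_of_nonneg_left (hper μ hμ) (hα.1 μ)
          exact le_trans hw (le_csSup (hpath_bdd α hα) ⟨xP, hxPflow, rfl⟩)
  exact ⟨h1, h2, h3⟩


end NetworkInterdiction
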